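/- arXiv:2208.05161 — 9 statements merged into one kernel-verified Lean document; each statement's English description precedes it below -/
import Mathlib

section
/- For any positive integer k and any two finite groups A and B, ψ_k(A × B) ≤ ψ_k(A) · ψ_k(B), with equality if and only if gcd(|A|, |B|) = 1. -/
/-!
Since `orderOf (a, b) = lcm (orderOf a) (orderOf b) ≤ orderOf a * orderOf b`, the inequality holds
termwise once `ψ_k(A) ψ_k(B)` is expanded as a sum over `A × B`. Equality forces every pair of
element orders to be coprime, and by Cauchy's theorem this happens exactly when `|A|` and `|B|`
are coprime.
-/

section OrderOfProd

variable {G H : Type*} [LeftCancelMonoid G] [LeftCancelMonoid H] [Finite G] [Finite H]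

theorem orderOf_prod_le_mul (x : G × H) : orderOf x ≤ orderOf x.1 * orderOf x.2 := by
  rw [Prod.orderOf]
  exact Nat.le_of_dvd (Nat.mul_pos (orderOf_pos _) (orderOf_pos _)) (Nat.lcm_dvd_mul _ _)

theorem orderOf_prod_eq_mul_iff (x : G × H) :
    orderOf x = orderOf x.1 * orderOf x.2 ↔ (orderOf x.1).Coprime (orderOf x.2) := by
  simp [Prod.orderOf, Nat.lcm_eq_mul_iff, (orderOf_pos x.1).ne', (orderOf_pos x.2).ne',
    Nat.Coprime]

end OrderOfProd

theorem coprime_natCard_iff_forall_coprime_orderOf {G H : Type*} [Group G] [Group H] [Finite G]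
    [Finite H] :
    (Nat.card G).Coprime (Nat.card H) ↔ ∀ (g : G) (h : H), (orderOf g).Coprime (orderOf h) := by
  refine ⟨fun hc g h => hc.of_dvd (orderOf_dvd_natCard g) (orderOf_dvd_natCard h),
    fun hall => ?_⟩
  by_contra hnc
  obtain ⟨p, hp, hpG, hpH⟩ := Nat.Prime.not_coprime_iff_dvd.mp hnc
  have := Fact.mk hp
  obtain ⟨g, hg⟩ := exists_prime_orderOf_dvd_card' (G := G) p hpG
  obtain ⟨h, hh⟩ := exists_prime_orderOf_dvd_card' (G := H) p hpH
  have hcop := hall g h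
  rw [hg, hh, Nat.coprime_self] at hcop
  exact hp.ne_one hcop

/-- ψ_k(A × B) ≤ ψ_k(A)·ψ_k(B), with equality iff gcd(|A|,|B|) = 1. -/
theorem psiK_prod_le {A B : Type*} [Group A] [Group B] [Fintype A] [Fintype B]
    (k : ℕ) (hk : 0 < k) :
    (∑ g : A × B, orderOf g ^ k) ≤ (∑ a : A, orderOf a ^ k) * (∑ b : B, orderOf b ^ k) ∧
    ((∑ g : A × B, orderOf g ^ k) = (∑ a : A, orderOf a ^ k) * (∑ b : B, orderOf b ^ k) ↔
      Nat.Coprime (Fintype.card A) (Fintype.card B)) := by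
  have hexpand : (∑ a : A, orderOf a ^ k) * (∑ b : B, orderOf b ^ k)
      = ∑ x : A × B, (orderOf x.1 * orderOf x.2) ^ k := by
    simp only [Fintype.sum_mul_sum, Fintype.sum_prod_type, mul_pow]
  have htermwise (x : A × B) : orderOf x ^ k ≤ (orderOf x.1 * orderOf x.2) ^ k :=
    Nat.pow_le_pow_left (orderOf_prod_le_mul x) k
  rw [hexpand, Finset.sum_eq_sum_iff_of_le fun x _ => htermwise x, ← Nat.card_eq_fintype_card,
    ← Nat.card_eq_fintype_card, coprime_natCard_iff_forall_coprime_orderOf]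
  refine ⟨Finset.sum_le_sum fun x _ => htermwise x, ?_⟩
  simp only [Finset.mem_univ, forall_const, pow_left_inj₀ (Nat.zero_le _) (Nat.zero_le _) hk.ne',
    orderOf_prod_eq_mul_iff, Prod.forall]
end

section
/- Let G = P ⋊ F be a finite group where P is a cyclic p-group, |F| > 1, and gcd(p, |F|) = 1. If u ∈ P and x ∈ F \ C_F(P), then o(ux) = o(x). -/
/-!
A nontrivial automorphism `α` of a cyclic `p`-group `P` of order `p ^ m` whose order `n` is prime
to `p` is fixed-point-free. Indeed `α` is a power map `v ↦ v ^ k`; a nontrivial fixed point forces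
`p ∣ k - 1`, and then lifting the exponent turns `p ^ m ∣ k ^ n - 1` into `p ^ m ∣ k - 1`, that is
`α = 1`. Hence every `u ∈ P` is of the form `w * α(w)⁻¹`, and for `α = φ x` this makes `u x` the
conjugate of `x` by `w`.
-/

theorem pow_dvd_sub_one_of_pow_dvd_pow_sub_one {R : Type*} [CommRing R] [IsDomain R] {p k : R}
    (hp : Prime p) (hk : p ∣ k - 1) {m n : ℕ} (hn : ¬ p ∣ (n : R)) (h : p ^ m ∣ k ^ n - 1) :
    p ^ m ∣ k - 1 := by
  have hpk : ¬ p ∣ k := fun hpk => hp.not_dvd_one (by simpa using dvd_sub hpk hk)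
  rw [pow_dvd_iff_le_emultiplicity, ← one_pow n,
    emultiplicity_pow_sub_pow_of_prime hp hk hpk hn, ← pow_dvd_iff_le_emultiplicity] at h
  exact h

theorem MulAut.pow_apply_eq_zpow {G : Type*} [Group G] {α : MulAut G} {k : ℤ}
    (hk : ∀ g, α g = g ^ k) (j : ℕ) (g : G) : (α ^ j) g = g ^ (k ^ j) := by
  induction j with
  | zero => simp
  | succ j ih => rw [pow_succ', MulAut.mul_apply, ih, hk, ← zpow_mul, ← pow_succ]

theorem IsPGroup.fixedPointFree_of_coprime_orderOf {p : ℕ} [Fact p.Prime] {P : Type*} [Group P]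
    [Finite P] [IsCyclic P] (hP : IsPGroup p P) {α : MulAut P} (hα : p.Coprime (orderOf α))
    (hα1 : α ≠ 1) : MonoidHom.FixedPointFree α := by
  obtain ⟨m, hm⟩ := IsPGroup.iff_card.mp hP
  have hexp : (Monoid.exponent P : ℤ) = (p : ℤ) ^ m := by
    rw [IsCyclic.exponent_eq_card, hm]; push_cast; rfl
  obtain ⟨k, hk⟩ := (α : P ≃* P).toMonoidHom.map_cyclic
  change ∀ g, α g = g ^ k at hk
  have hkn : (p : ℤ) ^ m ∣ k ^ orderOf α - 1 := by
    rw [← hexp, Group.exponent_dvd_sub_iff_zpow_eq_zpow]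
    intro g
    rw [← MulAut.pow_apply_eq_zpow hk, pow_orderOf_eq_one, zpow_one, MulAut.one_apply]
  intro c hc
  by_contra hc_ne
  apply hα1
  obtain ⟨j, hj⟩ := IsPGroup.iff_orderOf.mp hP c
  have hj0 : j ≠ 0 := by rintro rfl; exact hc_ne (orderOf_eq_one_iff.mp hj)
  have hpk : (p : ℤ) ∣ k - 1 := by
    have : (orderOf c : ℤ) ∣ k - 1 := by
      rw [orderOf_dvd_iff_zpow_eq_one, zpow_sub_one, ← hk, hc, mul_inv_cancel]
    rw [hj] at this
    exact dvd_trans (by exact_mod_cast dvd_pow_self p hj0) this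
  have hpn : ¬ (p : ℤ) ∣ (orderOf α : ℤ) := by
    exact_mod_cast (Nat.Prime.coprime_iff_not_dvd Fact.out).mp hα
  have hkm :=
    pow_dvd_sub_one_of_pow_dvd_pow_sub_one (Nat.prime_iff_prime_int.mp Fact.out) hpk hpn hkn
  rw [← hexp, Group.exponent_dvd_sub_iff_zpow_eq_zpow] at hkm
  ext g
  rw [hk, hkm, zpow_one, MulAut.one_apply]

theorem SemidirectProduct.orderOf_mk_div_apply {N G : Type*} [Group N] [Group G]
    {φ : G →* MulAut N} (w : N) (g : G) :
    orderOf (⟨w / φ g w, g⟩ : N ⋊[φ] G) = orderOf g := by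
  have hconj : (⟨w / φ g w, g⟩ : N ⋊[φ] G) = MulAut.conj (inl w) (inr g) := by
    ext <;> simp [div_eq_mul_inv]
  rw [hconj, MulEquiv.orderOf_eq, orderOf_injective _ inr_injective]

theorem semidirect_order_eq_general {P F : Type*} [Group P] [Group F] [Fintype P] [Fintype F]
    (p : ℕ) (hp : p.Prime) (hPp : IsPGroup p P) (hcyc : IsCyclic P)
    (hcop : Nat.Coprime p (Fintype.card F))
    (φ : F →* MulAut P) (u : P) (x : F) (hx : ¬ ∀ v : P, φ x v = v) :
    orderOf (⟨u, x⟩ : P ⋊[φ] F) = orderOf x := by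
  have : Fact p.Prime := ⟨hp⟩
  have hφx : φ x ≠ 1 := fun h => hx fun v => by rw [h, MulAut.one_apply]
  have hcop' : p.Coprime (orderOf (φ x)) :=
    hcop.coprime_dvd_right ((orderOf_map_dvd φ x).trans orderOf_dvd_card)
  obtain ⟨w, rfl⟩ := (hPp.fixedPointFree_of_coprime_orderOf hcop' hφx).commutatorMap_surjective u
  exact SemidirectProduct.orderOf_mk_div_apply w x

/-- In G = P ⋊ F with P a cyclic p-group, |F| > 1, gcd(p,|F|) = 1: if u ∈ P and
x ∈ F \ C_F(P) then o(ux) = o(x). -/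
theorem semidirect_order_eq {P F : Type*} [Group P] [Group F] [Fintype P] [Fintype F]
    (p : ℕ) (hp : p.Prime) (hPp : IsPGroup p P) (hcyc : IsCyclic P)
    (hF : 1 < Fintype.card F) (hcop : Nat.Coprime p (Fintype.card F))
    (φ : F →* MulAut P) (u : P) (x : F) (hx : ¬ ∀ v : P, φ x v = v) :
    orderOf (⟨u, x⟩ : P ⋊[φ] F) = orderOf x :=
  semidirect_order_eq_general p hp hPp hcyc hcop φ u x hx
end

section
/- Let G = P ⋊ F be a finite group where P is a cyclic p-group, |F| > 1, gcd(p,|F|) = 1, and let Z = C_F(P). Then for every positive integer k, ψ_k(G) = ψ_k(P)·ψ_k(Z) + |P|·Σ_{x ∈ F\Z} o(x)^k, and in particular ψ_k(G) < ψ_k(P)·ψ_k(Z) + |P|·ψ_k(F). -/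
/-!
Split `ψ_k(G)` over the fibres `{⟨u, x⟩ | u ∈ P}` of `G → F`. If `x` centralizes `P`, then
`⟨u, x⟩ = u · x` is a product of commuting elements of coprime orders, so its order is
`o(u) o(x)`. Otherwise `x` acts on the cyclic group `P` of order `p^m` as `u ↦ u^t` with
`t ≢ 1` and `t^n ≡ 1 (mod p^m)`, where `n = o(x)` is prime to `p`. If `p ∣ t - 1`, lifting the
exponent would give `v_p(t - 1) = v_p(t^n - 1) ≥ m`; so `t - 1` is prime to `p`, whence `p^m`
divides `1 + t + ⋯ + t^(n-1)` and `⟨u, x⟩^n = ⟨u^(1 + t + ⋯ + t^(n-1)), x^n⟩ = 1`. Thus every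
element of such a fibre has order `o(x)`.
-/

open Finset

theorem pow_dvd_geom_sum_of_pow_dvd_pow_sub_one {R : Type*} [CommRing R] [IsDomain R] {p t : R}
    (hp : Prime p) {m n : ℕ} (hn : ¬p ∣ (n : R)) (htn : p ^ m ∣ t ^ n - 1)
    (ht : ¬p ^ m ∣ t - 1) : p ^ m ∣ ∑ i ∈ range n, t ^ i := by
  have hpt : ¬p ∣ t - 1 := by
    intro h
    have ht0 : ¬p ∣ t := fun h' => hp.not_dvd_one (by simpa using dvd_sub h' h)
    apply ht
    rw [pow_dvd_iff_le_emultiplicity, ← emultiplicity_pow_sub_pow_of_prime hp h ht0 hn, one_pow]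
    exact pow_dvd_iff_le_emultiplicity.1 htn
  rw [pow_dvd_iff_le_emultiplicity] at htn ⊢
  rwa [← geom_sum_mul, emultiplicity_mul hp, emultiplicity_eq_zero.2 hpt, add_zero] at htn

theorem MulAut.pow_apply_of_forall_eq_zpow {N : Type*} [Group N] {α : MulAut N} {t : ℤ}
    (ht : ∀ v, α v = v ^ t) (i : ℕ) (v : N) : (α ^ i) v = v ^ t ^ i := by
  induction i with
  | zero => simp
  | succ i ih => rw [pow_succ, MulAut.mul_apply, ht, map_zpow, ih, ← zpow_mul, pow_succ]

namespace SemidirectProduct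

variable {N G : Type*} [Group N] [Group G] {φ : G →* MulAut N}

theorem sum_eq_sum_sum {M : Type*} [AddCommMonoid M] [Fintype N] [Fintype G]
    [Fintype (N ⋊[φ] G)] (f : N ⋊[φ] G → M) :
    ∑ g, f g = ∑ x : G, ∑ u : N, f ⟨u, x⟩ := by
  rw [Fintype.sum_equiv equivProd f (fun q => f ⟨q.1, q.2⟩) (fun _ => rfl),
    Fintype.sum_prod_type, Finset.sum_comm]

theorem mk_pow_of_forall_eq_zpow {x : G} {t : ℤ} (ht : ∀ v, φ x v = v ^ t) (u : N) (n : ℕ) :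
    (⟨u, x⟩ : N ⋊[φ] G) ^ n = ⟨u ^ ∑ i ∈ range n, t ^ i, x ^ n⟩ := by
  induction n with
  | zero => ext <;> simp
  | succ n ih =>
    rw [pow_succ, ih]
    ext
    · rw [mul_left, map_pow, MulAut.pow_apply_of_forall_eq_zpow ht, sum_range_succ, zpow_add]
    · rw [mul_right, pow_succ]

theorem orderOf_mk_of_map_eq_one {x : G} (hx : φ x = 1) {u : N}
    (hco : (orderOf u).Coprime (orderOf x)) :
    orderOf (⟨u, x⟩ : N ⋊[φ] G) = orderOf u * orderOf x := by
  have hcomm : Commute (inl u : N ⋊[φ] G) (inr x) := by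
    ext <;> simp [hx]
  rw [mk_eq_inl_mul_inr, hcomm.orderOf_mul_eq_mul_orderOf_of_coprime, orderOf_injective _ inl_injective,
    orderOf_injective _ inr_injective]
  rwa [orderOf_injective _ inl_injective, orderOf_injective _ inr_injective]

theorem orderOf_mk_of_map_ne_one {p : ℕ} [hp : Fact p.Prime] [Finite N] [IsCyclic N]
    (hN : IsPGroup p N) {x : G} (hx : ¬p ∣ orderOf x) (hφx : φ x ≠ 1) (u : N) :
    orderOf (⟨u, x⟩ : N ⋊[φ] G) = orderOf x := by
  obtain ⟨t, ht⟩ := MonoidHom.map_cyclic (φ x).toMonoidHom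
  replace ht : ∀ v, φ x v = v ^ t := ht
  obtain ⟨m, hm⟩ := IsPGroup.iff_card.1 hN
  have hexp (z : ℤ) : (∀ v : N, v ^ z = 1) ↔ (p : ℤ) ^ m ∣ z := by
    rw [← Group.exponent_dvd_iff_forall_zpow_eq_one, IsCyclic.exponent_eq_card, hm]
    push_cast; rfl
  have htn : (p : ℤ) ^ m ∣ t ^ orderOf x - 1 := (hexp _).1 fun v => by
    rw [zpow_sub_one, ← MulAut.pow_apply_of_forall_eq_zpow ht, ← map_pow, pow_orderOf_eq_one,
      map_one, MulAut.one_apply, mul_inv_cancel]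
  have ht1 : ¬(p : ℤ) ^ m ∣ t - 1 := fun h => hφx <| MulEquiv.ext fun v => by
    rw [ht, MulAut.one_apply, ← mul_inv_eq_one, ← zpow_sub_one, (hexp _).2 h]
  have hS := pow_dvd_geom_sum_of_pow_dvd_pow_sub_one (Nat.prime_iff_prime_int.1 hp.out)
    (by exact_mod_cast hx) htn ht1
  refine Nat.dvd_antisymm (orderOf_dvd_of_pow_eq_one ?_) ?_
  · rw [mk_pow_of_forall_eq_zpow ht, pow_orderOf_eq_one, (hexp _).2 hS u]
    rfl
  · simpa using orderOf_map_dvd (rightHom : N ⋊[φ] G →* G) ⟨u, x⟩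

end SemidirectProduct

open SemidirectProduct in
theorem semidirect_psiK_general {P F : Type*} [Group P] [Group F] [Fintype P] [Fintype F]
    [DecidableEq P] [DecidableEq F]
    (p : ℕ) (hp : p.Prime) (hPp : IsPGroup p P) (hcyc : IsCyclic P)
    (hcop : Nat.Coprime p (Fintype.card F))
    (φ : F →* MulAut P) [Fintype (P ⋊[φ] F)] (k : ℕ) :
    (∑ g : P ⋊[φ] F, orderOf g ^ k) =
      (∑ u : P, orderOf u ^ k) *
        (∑ x ∈ Finset.univ.filter (fun x : F => ∀ v : P, φ x v = v), orderOf x ^ k) +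
      Fintype.card P *
        (∑ x ∈ (Finset.univ.filter (fun x : F => ∀ v : P, φ x v = v))ᶜ, orderOf x ^ k) ∧
    (∑ g : P ⋊[φ] F, orderOf g ^ k) <
      (∑ u : P, orderOf u ^ k) *
        (∑ x ∈ Finset.univ.filter (fun x : F => ∀ v : P, φ x v = v), orderOf x ^ k) +
      Fintype.card P * (∑ x : F, orderOf x ^ k) := by
  have := Fact.mk hp
  set Z := Finset.univ.filter fun x : F => ∀ v : P, φ x v = v
  have hmem (x : F) : x ∈ Z ↔ φ x = 1 := by simp [Z, MulEquiv.ext_iff]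
  have hcopx (x : F) : p.Coprime (orderOf x) := hcop.coprime_dvd_right orderOf_dvd_card
  have hZ : ∀ x ∈ Z, ∑ u : P, orderOf (⟨u, x⟩ : P ⋊[φ] F) ^ k =
      (∑ u : P, orderOf u ^ k) * orderOf x ^ k := fun x hx => by
    rw [sum_mul]
    refine sum_congr rfl fun u _ => ?_
    rw [orderOf_mk_of_map_eq_one ((hmem x).1 hx) (hPp.orderOf_coprime (hcopx x) u), mul_pow]
  have hZc : ∀ x ∈ Zᶜ, ∑ u : P, orderOf (⟨u, x⟩ : P ⋊[φ] F) ^ k =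
      Fintype.card P * orderOf x ^ k := fun x hx => by
    have hφx : φ x ≠ 1 := (hmem x).not.1 (mem_compl.1 hx)
    simp only [orderOf_mk_of_map_ne_one hPp ((hp.coprime_iff_not_dvd).1 (hcopx x)) hφx,
      sum_const, card_univ, smul_eq_mul]
  have hψ : ∑ g : P ⋊[φ] F, orderOf g ^ k = (∑ u : P, orderOf u ^ k) * ∑ x ∈ Z, orderOf x ^ k +
      Fintype.card P * ∑ x ∈ Zᶜ, orderOf x ^ k := by
    rw [sum_eq_sum_sum, ← sum_add_sum_compl Z, sum_congr rfl hZ, sum_congr rfl hZc, mul_sum,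
      mul_sum]
  refine ⟨hψ, hψ ▸ Nat.add_lt_add_left ((Nat.mul_lt_mul_left Fintype.card_pos).2 ?_) _⟩
  -- `1 ∈ Z` and `o(1)^k = 1`
  exact sum_lt_sum_of_subset (subset_univ _) (mem_univ 1) (by simp [Z]) (by simp)
    fun _ _ _ => Nat.zero_le _

/-- In G = P ⋊ F with P a cyclic p-group, |F| > 1, gcd(p,|F|) = 1, and Z = C_F(P):
ψ_k(G) = ψ_k(P)·ψ_k(Z) + |P|·ψ_k(F∖Z) < ψ_k(P)·ψ_k(Z) + |P|·ψ_k(F). -/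
theorem semidirect_psiK {P F : Type*} [Group P] [Group F] [Fintype P] [Fintype F]
    [DecidableEq P] [DecidableEq F]
    (p : ℕ) (hp : p.Prime) (hPp : IsPGroup p P) (hcyc : IsCyclic P)
    (hF : 1 < Fintype.card F) (hcop : Nat.Coprime p (Fintype.card F))
    (φ : F →* MulAut P) [Fintype (P ⋊[φ] F)] (k : ℕ) (hk : 0 < k) :
    (∑ g : P ⋊[φ] F, orderOf g ^ k) =
      (∑ u : P, orderOf u ^ k) *
        (∑ x ∈ Finset.univ.filter (fun x : F => ∀ v : P, φ x v = v), orderOf x ^ k) +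
      Fintype.card P *
        (∑ x ∈ (Finset.univ.filter (fun x : F => ∀ v : P, φ x v = v))ᶜ, orderOf x ^ k) ∧
    (∑ g : P ⋊[φ] F, orderOf g ^ k) <
      (∑ u : P, orderOf u ^ k) *
        (∑ x ∈ Finset.univ.filter (fun x : F => ∀ v : P, φ x v = v), orderOf x ^ k) +
      Fintype.card P * (∑ x : F, orderOf x ^ k) :=
  semidirect_psiK_general p hp hPp hcyc hcop φ k
end

section
/- For a prime p and positive integers k, r, the cyclic group G = Z_{p^r} satisfies ψ_k(G) = (p^{kr+k+r+1} − p^{kr+k+r} + p^k − 1)/(p^{k+1} − 1). -/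
/-!
Grouping the elements of a cyclic group of order `n` by their order, each divisor `d ∣ n` occurs
as the order of exactly `φ d` elements, so `ψ_k(Z_n) = ∑_{d ∣ n} φ(d) d^k`. For `n = p^r` this is
`1 + (p - 1) p^k ∑_{i < r} (p^(k+1))^i`, a geometric sum.
-/

open Finset

theorem IsCyclic.sum_orderOf_eq_sum_divisors {G M : Type*} [Group G] [Fintype G] [IsCyclic G]
    [AddCommMonoid M] (f : ℕ → M) :
    ∑ g : G, f (orderOf g) = ∑ d ∈ (Fintype.card G).divisors, Nat.totient d • f d := by
  rw [← sum_fiberwise_of_maps_to (g := orderOf) fun g _ =>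
    Nat.mem_divisors.mpr ⟨orderOf_dvd_card, Fintype.card_ne_zero⟩]
  refine sum_congr rfl fun d hd => ?_
  rw [sum_congr rfl fun g hg => congrArg f (mem_filter.mp hg).2, sum_const,
    IsCyclic.card_orderOf_eq_totient (Nat.dvd_of_mem_divisors hd)]

theorem sum_totient_prime_pow_mul_pow_mul {R : Type*} [CommRing R] {p : ℕ} (hp : p.Prime)
    (k r : ℕ) :
    (∑ i ∈ range (r + 1), ((p ^ i).totient : R) * ((p : R) ^ i) ^ k) * ((p : R) ^ (k + 1) - 1) =
      (p : R) ^ (k * r + k + r + 1) - (p : R) ^ (k * r + k + r) + (p : R) ^ k - 1 := by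
  have hgeom := geom_sum_mul ((p : R) ^ (k + 1)) r
  have hterm : ∀ i, ((p ^ (i + 1)).totient : R) * ((p : R) ^ (i + 1)) ^ k =
      ((p : R) - 1) * (p : R) ^ k * ((p : R) ^ (k + 1)) ^ i := fun i => by
    rw [Nat.totient_prime_pow_succ hp, Nat.cast_mul, Nat.cast_sub hp.one_le]
    push_cast
    ring
  rw [sum_range_succ', sum_congr rfl fun i _ => hterm i, ← mul_sum]
  simp only [pow_zero, Nat.totient_one, Nat.cast_one, one_pow, mul_one]
  linear_combination ((p : R) - 1) * (p : R) ^ k * hgeom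

theorem psiK_cyclic_p_pow_general (p k r : ℕ) (hp : p.Prime)
    [NeZero p] :
    (∑ g : Multiplicative (ZMod (p ^ r)), (orderOf g : ℚ) ^ k) =
      ((p : ℚ) ^ (k * r + k + r + 1) - (p : ℚ) ^ (k * r + k + r) + (p : ℚ) ^ k - 1) /
        ((p : ℚ) ^ (k + 1) - 1) := by
  have hden : (p : ℚ) ^ (k + 1) - 1 ≠ 0 :=
    sub_ne_zero.mpr (one_lt_pow₀ (by exact_mod_cast hp.one_lt) k.succ_ne_zero).ne'
  rw [eq_div_iff hden, IsCyclic.sum_orderOf_eq_sum_divisors fun d : ℕ => (d : ℚ) ^ k, Fintype.card_multiplicative,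
    ZMod.card, Nat.sum_divisors_prime_pow hp]
  simp only [nsmul_eq_mul, Nat.cast_pow]
  exact sum_totient_prime_pow_mul_pow_mul hp k r

/-- ψ_k(Z_{p^r}) = (p^{kr+k+r+1} − p^{kr+k+r} + p^k − 1)/(p^{k+1} − 1). -/
theorem psiK_cyclic_p_pow (p k r : ℕ) (hp : p.Prime) (hk : 0 < k) (hr : 0 < r)
    [NeZero p] :
    (∑ g : Multiplicative (ZMod (p ^ r)), (orderOf g : ℚ) ^ k) =
      ((p : ℚ) ^ (k * r + k + r + 1) - (p : ℚ) ^ (k * r + k + r) + (p : ℚ) ^ k - 1) /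
        ((p : ℚ) ^ (k + 1) - 1) :=
  psiK_cyclic_p_pow_general p k r hp
end

section
/- For a prime p and positive integers k, r, s, the group G = (Z_{p^r})^s (direct product of s copies of Z_{p^r}) satisfies ψ_k(G) = (p^{sr+s+rk+k} − p^{sr+kr+k} + p^k − 1)/(p^{s+k} − 1). -/
/-!
If `g ^ p ^ r = 1` then `g` has order `p ^ m` with `m ≤ r`, and telescoping gives
`o(g)^k = p^{kr} - ∑_{m ≤ j < r} (p^{k(j+1)} - p^{kj})`, where `m ≤ j` says exactly that
`g ^ p ^ j = 1`. Summing over `G` and exchanging the sums expresses `ψ_k(G)` through the numbers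
of solutions of `g ^ p ^ j = 1`, which in `(ℤ/p^r)^s` are `p^{js}`; what remains is a geometric sum.
-/

open Finset

theorem IsCyclic.card_pi_pow_eq_one {ι G : Type*} [Finite ι] [CommGroup G] [IsCyclic G] [Finite G]
    (d : ℕ) : Nat.card {g : ι → G // g ^ d = 1} = (Nat.card G).gcd d ^ Nat.card ι := by
  have hker (x : G) : x ^ d = 1 ↔ x ∈ (powMonoidHom d : G →* G).ker := by
    rw [MonoidHom.mem_ker, powMonoidHom_apply]
  calc Nat.card {g : ι → G // g ^ d = 1}
      = Nat.card (ι → (powMonoidHom d : G →* G).ker) :=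
        Nat.card_congr <| (Equiv.subtypeEquivRight fun g : ι → G =>
          funext_iff.trans (forall_congr' fun i => hker (g i))).trans
          Equiv.subtypePiEquivPi
    _ = (Nat.card G).gcd d ^ Nat.card ι := by
        rw [Nat.card_fun, IsCyclic.card_powMonoidHom_ker]

section PrimePowerExponent

variable {G R : Type*} [Group G] [CommRing R] {p r : ℕ}

theorem pow_prime_pow_eq_one_iff_of_orderOf_eq (hp : p.Prime) {g : G} {m : ℕ}
    (hg : orderOf g = p ^ m) (j : ℕ) : g ^ p ^ j = 1 ↔ m ≤ j := by
  rw [← orderOf_dvd_iff_pow_eq_one, hg, Nat.pow_dvd_pow_iff_le_right hp.one_lt]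

theorem orderOf_pow_eq_sub_sum [DecidableEq G] (hp : p.Prime) {g : G} (hg : g ^ p ^ r = 1)
    (k : ℕ) :
    (orderOf g : R) ^ k = ((p : R) ^ k) ^ r -
      ∑ j ∈ range r, if g ^ p ^ j = 1 then ((p : R) ^ k) ^ (j + 1) - ((p : R) ^ k) ^ j else 0 := by
  obtain ⟨m, hmr, hm⟩ := (Nat.dvd_prime_pow hp).1 (orderOf_dvd_of_pow_eq_one hg)
  have hfilter : {j ∈ range r | g ^ p ^ j = 1} = Ico m r := by
    ext j
    simp [pow_prime_pow_eq_one_iff_of_orderOf_eq hp hm, and_comm]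
  rw [← sum_filter, hfilter, sum_Ico_sub _ hmr, hm]
  push_cast
  ring

theorem sum_orderOf_pow_eq [Fintype G] (hp : p.Prime) (hG : ∀ g : G, g ^ p ^ r = 1) (k : ℕ) :
    ∑ g : G, (orderOf g : R) ^ k = Fintype.card G * ((p : R) ^ k) ^ r -
      ∑ j ∈ range r, Nat.card {g : G // g ^ p ^ j = 1} *
        (((p : R) ^ k) ^ (j + 1) - ((p : R) ^ k) ^ j) := by
  classical
  simp_rw [orderOf_pow_eq_sub_sum hp (hG _), sum_sub_distrib, sum_const, card_univ, nsmul_eq_mul]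
  rw [sum_comm]
  congr 2 with j
  rw [← sum_filter, sum_const, nsmul_eq_mul, Nat.card_eq_fintype_card, Fintype.card_subtype]

end PrimePowerExponent

theorem mul_pow_sub_sum_eq_div {K : Type*} [Field K] {x y : K} (hxy : x * y ≠ 1) (r : ℕ) :
    (x * y) ^ r - ∑ j ∈ range r, y ^ j * (x ^ (j + 1) - x ^ j) =
      ((x * y) ^ (r + 1) - x * (x * y) ^ r + x - 1) / (x * y - 1) := by
  have hsum : ∑ j ∈ range r, y ^ j * (x ^ (j + 1) - x ^ j) =
      (x - 1) * ∑ j ∈ range r, (x * y) ^ j := by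
    rw [mul_sum]
    exact sum_congr rfl fun j _ => by ring
  rw [hsum, geom_sum_eq hxy, eq_div_iff (sub_ne_zero.mpr hxy)]
  field_simp
  ring

theorem psiK_elem_abelian_general (p k r s : ℕ) (hp : p.Prime) (hk : 0 < k) [NeZero p] :
    (∑ g : Fin s → Multiplicative (ZMod (p ^ r)), (orderOf g : ℚ) ^ k) =
      ((p : ℚ) ^ (s * r + s + r * k + k) - (p : ℚ) ^ (s * r + k * r + k) + (p : ℚ) ^ k - 1) /
        ((p : ℚ) ^ (s + k) - 1) := by
  have hexp (g : Fin s → Multiplicative (ZMod (p ^ r))) : g ^ p ^ r = 1 :=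
    funext fun i => by simpa using pow_card_eq_one' (x := g i)
  have hcount {j : ℕ} (hj : j ≤ r) :
      Nat.card {g : Fin s → Multiplicative (ZMod (p ^ r)) // g ^ p ^ j = 1} = (p ^ s) ^ j := by
    rw [IsCyclic.card_pi_pow_eq_one, Nat.card_fin, Nat.card_eq_fintype_card,
      Fintype.card_multiplicative, ZMod.card, Nat.gcd_eq_right (pow_dvd_pow p hj), ← pow_mul,
      ← pow_mul, mul_comm]
  have hxy : (p : ℚ) ^ k * (p : ℚ) ^ s ≠ 1 := by
    rw [← pow_add]
    exact (one_lt_pow₀ (by exact_mod_cast hp.one_lt) (by omega)).ne'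
  rw [sum_orderOf_pow_eq hp hexp, sum_congr rfl fun j hj => by rw [hcount (mem_range.1 hj).le]]
  convert mul_pow_sub_sum_eq_div hxy r using 1
  · simp only [Fintype.card_pi, Fintype.card_multiplicative, ZMod.card, prod_const, card_univ,
      Fintype.card_fin, Nat.cast_pow]
    ring
  · ring

/-- ψ_k((Z_{p^r})^s) = (p^{sr+s+rk+k} − p^{sr+kr+k} + p^k − 1)/(p^{s+k} − 1). -/
theorem psiK_elem_abelian (p k r s : ℕ) (hp : p.Prime) (hk : 0 < k) (hr : 0 < r)
    (hs : 0 < s) [NeZero p] :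
    (∑ g : Fin s → Multiplicative (ZMod (p ^ r)), (orderOf g : ℚ) ^ k) =
      ((p : ℚ) ^ (s * r + s + r * k + k) - (p : ℚ) ^ (s * r + k * r + k) + (p : ℚ) ^ k - 1) /
        ((p : ℚ) ^ (s + k) - 1) :=
  psiK_elem_abelian_general p k r s hp hk
end

section
/- Let n be a positive integer with smallest prime divisor q and largest prime divisor p, and let k be a positive integer. Then ψ_k(Z_n) > q^k/(1 + p + ⋯ + p^k) · n^{k+1} ≥ (q/(p+1))^k · n^{k+1}. -/
open Finset ArithmeticFunction
open scoped ArithmeticFunction.zeta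

/-!
Counting elements by order, `ψ_k(ℤ/n) = ∑_{d ∣ n} φ(d) d^k`, which is multiplicative in `n`.
At a prime power, `(1 + r + ⋯ + r^k) ψ_k(r^a) = r^{a(k+1)+k} + (1 + r + ⋯ + r^{k-1})`, so
`ψ_k(n) > n^{k+1} ∏_{r ∣ n} r^k / (1 + r + ⋯ + r^k)`. Since `1 + r + ⋯ + r^k ≤ (r+1)^k`, each
factor with `r < p` is at least `(r/(r+1))^k`, and as the primes `r < p` dividing `n` are distinct
integers in `[q, p)`, `∏ r/(r+1) ≥ ∏_{q ≤ r < p} r/(r+1) = q/p`. Together with the factor at `p`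
this gives `q^k / (1 + p + ⋯ + p^k)`.
-/

theorem IsCyclic.sum_orderOf {G M : Type*} [Group G] [Fintype G] [IsCyclic G] [AddCommMonoid M]
    (f : ℕ → M) :
    ∑ g : G, f (orderOf g) = ∑ d ∈ (Fintype.card G).divisors, d.totient • f d := by
  classical
  rw [← sum_fiberwise_of_maps_to (t := (Fintype.card G).divisors) (g := orderOf)
    fun g _ ↦ Nat.mem_divisors.2 ⟨orderOf_dvd_card, Fintype.card_ne_zero⟩]
  refine sum_congr rfl fun d hd ↦ ?_
  rw [sum_congr rfl fun g hg ↦ by rw [(mem_filter.1 hg).2], sum_const,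
    IsCyclic.card_orderOf_eq_totient (Nat.dvd_of_mem_divisors hd)]

theorem geom_sum_le_add_one_pow {R : Type*} [CommSemiring R] [PartialOrder R] [IsOrderedRing R]
    {x : R} (hx : 0 ≤ x) (k : ℕ) : ∑ i ∈ range (k + 1), x ^ i ≤ (x + 1) ^ k := by
  induction k with
  | zero => simp
  | succ k ih =>
    have h1 : 1 ≤ (x + 1) ^ k := one_le_pow₀ (le_add_of_nonneg_left hx)
    calc ∑ i ∈ range (k + 2), x ^ i = x * ∑ i ∈ range (k + 1), x ^ i + 1 := geom_sum_succ
      _ ≤ x * (x + 1) ^ k + (x + 1) ^ k := add_le_add (mul_le_mul_of_nonneg_left ih hx) h1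
      _ = (x + 1) ^ (k + 1) := by ring

theorem pow_lt_geom_sum {R : Type*} [Semiring R] [PartialOrder R] [IsStrictOrderedRing R]
    {x : R} (hx : 0 ≤ x) {k : ℕ} (hk : 0 < k) : x ^ k < ∑ i ∈ range (k + 1), x ^ i := by
  rw [sum_range_succ]
  exact lt_add_of_pos_left _ (geom_sum_pos hx hk.ne')

section Psi

variable {R : Type*}

def totientMulPow [Semiring R] (k : ℕ) : ArithmeticFunction R :=
  ⟨fun d ↦ (d.totient : R) * (d : R) ^ k, by simp⟩

/-- `ψ_k(ℤ/n)`, by `IsCyclic.sum_orderOf`. -/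
def cyclicPsi [Semiring R] (k : ℕ) : ArithmeticFunction R :=
  (ζ : ArithmeticFunction R) * totientMulPow k

theorem cyclicPsi_apply [Semiring R] (k n : ℕ) :
    cyclicPsi k n = ∑ d ∈ n.divisors, (d.totient : R) * (d : R) ^ k := by
  rw [cyclicPsi, coe_zeta_mul_apply]
  rfl

theorem isMultiplicative_cyclicPsi [CommSemiring R] (k : ℕ) :
    (cyclicPsi k : ArithmeticFunction R).IsMultiplicative := by
  refine isMultiplicative_zeta.natCast.mul ⟨by simp [totientMulPow], fun {m n} hmn ↦ ?_⟩
  simp only [totientMulPow, coe_mk, Nat.totient_mul hmn]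
  push_cast
  ring

theorem cyclicPsi_prime_pow_mul_geom_sum [CommRing R] {r : ℕ} (hr : r.Prime) (k a : ℕ) :
    (cyclicPsi k (r ^ a) : R) * ∑ i ∈ range (k + 1), (r : R) ^ i =
      ∑ i ∈ range (k + 1), (r : R) ^ i - (r : R) ^ k + (r : R) ^ (a * (k + 1) + k) := by
  induction a with
  | zero => simp [cyclicPsi_apply]
  | succ a ih =>
    have hstep : (cyclicPsi k (r ^ (a + 1)) : R) =
        cyclicPsi k (r ^ a) + (r : R) ^ a * (r - 1) * (r : R) ^ ((a + 1) * k) := by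
      simp only [cyclicPsi_apply, Nat.sum_divisors_prime_pow hr, sum_range_succ _ (a + 1),
        Nat.totient_prime_pow_succ hr]
      push_cast [Nat.cast_sub hr.one_le]
      ring
    rw [hstep, add_mul, ih]
    linear_combination (r : R) ^ a * (r : R) ^ ((a + 1) * k) * geom_sum_mul (r : R) (k + 1)

end Psi

section Field

variable {K : Type*} [Field K] [LinearOrder K] [IsStrictOrderedRing K]

theorem prod_Ico_div_add_one {a b : ℕ} (ha : 0 < a) (hab : a ≤ b) :
    ∏ r ∈ Ico a b, (r : K) / (r + 1) = a / b := by
  induction b, hab using Nat.le_induction with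
  | base => simp [div_self (Nat.cast_ne_zero.2 ha.ne' : (a : K) ≠ 0)]
  | succ b hab ih =>
    have hb : (b : K) ≠ 0 := Nat.cast_ne_zero.2 (ha.trans_le hab).ne'
    rw [prod_Ico_succ_top hab, ih]
    push_cast
    field_simp

theorem div_le_prod_div_add_one {s : Finset ℕ} {a b : ℕ} (ha : 0 < a) (hab : a ≤ b)
    (hs : s ⊆ Ico a b) : (a : K) / b ≤ ∏ r ∈ s, (r : K) / (r + 1) := by
  rw [← prod_Ico_div_add_one ha hab]
  exact prod_le_prod_of_subset_of_le_one hs (fun r _ ↦ by positivity)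
    fun r _ _ ↦ div_le_one_of_le₀ (by linarith) (by positivity)

theorem pow_mul_div_geom_sum_lt_cyclicPsi_prime_pow {r : ℕ} (hr : r.Prime) {k : ℕ} (hk : 0 < k)
    (a : ℕ) :
    (r : K) ^ (a * (k + 1)) * ((r : K) ^ k / ∑ i ∈ range (k + 1), (r : K) ^ i) <
      cyclicPsi k (r ^ a) := by
  have hS : 0 < ∑ i ∈ range (k + 1), (r : K) ^ i :=
    geom_sum_pos (Nat.cast_nonneg r) k.succ_ne_zero
  rw [mul_div_assoc', ← pow_add, div_lt_iff₀ hS, cyclicPsi_prime_pow_mul_geom_sum hr]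
  linarith [pow_lt_geom_sum (Nat.cast_nonneg (α := K) r) hk]

theorem pow_mul_prod_lt_cyclicPsi {n k : ℕ} (hn : 1 < n) (hk : 0 < k) :
    (n : K) ^ (k + 1) * ∏ r ∈ n.primeFactors, (r : K) ^ k / ∑ i ∈ range (k + 1), (r : K) ^ i <
      cyclicPsi k n := by
  have hn0 : n ≠ 0 := by omega
  have hn' : (n : K) ^ (k + 1) =
      ∏ r ∈ n.primeFactors, (r : K) ^ (n.factorization r * (k + 1)) := by
    conv_lhs => rw [Nat.prod_primeFactors_pow_factorization hn0]
    push_cast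
    simp only [← prod_pow, pow_mul]
  rw [(isMultiplicative_cyclicPsi k).multiplicative_factorization _ hn0,
    Nat.prod_factorization_eq_prod_primeFactors, hn', ← prod_mul_distrib]
  refine prod_lt_prod_of_nonempty (fun r hr ↦ ?_) (fun r hr ↦ ?_) (Nat.nonempty_primeFactors.2 hn)
  · have := (Nat.prime_of_mem_primeFactors hr).pos
    positivity
  · exact pow_mul_div_geom_sum_lt_cyclicPsi_prime_pow (Nat.prime_of_mem_primeFactors hr) hk _

theorem minFac_pow_div_geom_sum_le_prod_primeFactors {n k p : ℕ} (hn : n ≠ 0) (hp : p.Prime)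
    (hpn : p ∣ n) (hmax : ∀ r : ℕ, r.Prime → r ∣ n → r ≤ p) :
    (n.minFac : K) ^ k / ∑ i ∈ range (k + 1), (p : K) ^ i ≤
      ∏ r ∈ n.primeFactors, (r : K) ^ k / ∑ i ∈ range (k + 1), (r : K) ^ i := by
  set q := n.minFac
  have hq : 0 < q := Nat.minFac_pos n
  have hqp : q ≤ p := Nat.minFac_le_of_dvd hp.two_le hpn
  have hp0 : (0 : K) < p := Nat.cast_pos.2 hp.pos
  have hsub : n.primeFactors.erase p ⊆ Ico q p := fun r hr ↦ by
    obtain ⟨hrp, hrn⟩ := mem_erase.1 hr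
    have hr := Nat.prime_of_mem_primeFactors hrn
    have hrn := Nat.dvd_of_mem_primeFactors hrn
    exact mem_Ico.2 ⟨Nat.minFac_le_of_dvd hr.two_le hrn, (hmax r hr hrn).lt_of_ne hrp⟩
  have hfactor : ∀ r ∈ n.primeFactors.erase p,
      ((r : K) / (r + 1)) ^ k ≤ (r : K) ^ k / ∑ i ∈ range (k + 1), (r : K) ^ i := fun r _ ↦ by
    have hS : 0 < ∑ i ∈ range (k + 1), (r : K) ^ i :=
      geom_sum_pos (Nat.cast_nonneg r) k.succ_ne_zero
    rw [div_pow]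
    gcongr
    exact geom_sum_le_add_one_pow (Nat.cast_nonneg r) k
  calc (q : K) ^ k / ∑ i ∈ range (k + 1), (p : K) ^ i
      = ((q : K) / p) ^ k * ((p : K) ^ k / ∑ i ∈ range (k + 1), (p : K) ^ i) := by
        rw [div_pow]
        field_simp
    _ ≤ (∏ r ∈ n.primeFactors.erase p, (r : K) / (r + 1)) ^ k *
          ((p : K) ^ k / ∑ i ∈ range (k + 1), (p : K) ^ i) := by
        gcongr
        exact div_le_prod_div_add_one hq hqp hsub
    _ ≤ (∏ r ∈ n.primeFactors.erase p, (r : K) ^ k / ∑ i ∈ range (k + 1), (r : K) ^ i) *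
          ((p : K) ^ k / ∑ i ∈ range (k + 1), (p : K) ^ i) := by
        rw [← prod_pow]
        gcongr with r hr
        exact hfactor r hr
    _ = _ := prod_erase_mul _ _ (Nat.mem_primeFactors.2 ⟨hp, hpn, hn⟩)

end Field

/-- If q is the smallest and p the largest prime divisor of n, then
ψ_k(Z_n) > q^k/(1+p+⋯+p^k)·n^{k+1} ≥ (q/(p+1))^k·n^{k+1}. -/
theorem psiK_cyclic_lower_bound (n k p : ℕ) (hn : 1 < n) (hk : 0 < k) [NeZero n]
    (hp : p.Prime) (hpn : p ∣ n) (hmax : ∀ r : ℕ, r.Prime → r ∣ n → r ≤ p) :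
    ((n.minFac : ℚ) ^ k / (∑ i ∈ Finset.range (k + 1), (p : ℚ) ^ i)) * (n : ℚ) ^ (k + 1) <
      (∑ g : Multiplicative (ZMod n), (orderOf g : ℚ) ^ k) ∧
    ((n.minFac : ℚ) / ((p : ℚ) + 1)) ^ k * (n : ℚ) ^ (k + 1) ≤
      ((n.minFac : ℚ) ^ k / (∑ i ∈ Finset.range (k + 1), (p : ℚ) ^ i)) * (n : ℚ) ^ (k + 1) := by
  have hψ : ∑ g : Multiplicative (ZMod n), (orderOf g : ℚ) ^ k = cyclicPsi k n := by
    rw [IsCyclic.sum_orderOf (fun d ↦ (d : ℚ) ^ k), cyclicPsi_apply]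
    simp [ZMod.card, nsmul_eq_mul]
  have hSp : 0 < ∑ i ∈ range (k + 1), (p : ℚ) ^ i :=
    geom_sum_pos (Nat.cast_nonneg p) k.succ_ne_zero
  constructor
  · rw [hψ, mul_comm]
    calc (n : ℚ) ^ (k + 1) * ((n.minFac : ℚ) ^ k / ∑ i ∈ range (k + 1), (p : ℚ) ^ i)
        ≤ (n : ℚ) ^ (k + 1) *
            ∏ r ∈ n.primeFactors, (r : ℚ) ^ k / ∑ i ∈ range (k + 1), (r : ℚ) ^ i := by
          gcongr
          exact minFac_pow_div_geom_sum_le_prod_primeFactors (NeZero.ne n) hp hpn hmax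
      _ < cyclicPsi k n := pow_mul_prod_lt_cyclicPsi hn hk
  · gcongr
    rw [div_pow]
    gcongr
    exact geom_sum_le_add_one_pow (Nat.cast_nonneg p) k
end

section
/- Let G be a finite group with a cyclic normal Sylow p-subgroup P. Then for every positive integer k, ψ_k(G) ≤ ψ_k(P)·ψ_k(G/P), with equality if and only if P is contained in the center of G. -/
/-!
By Schur–Zassenhaus, `P` has a complement `K ≅ G ⧸ P`, so every element of `G` is uniquely `u * h`
with `u ∈ P`, `h ∈ K`. As `P` is cyclic, `h` acts on it by a power map `u ↦ u ^ r`, whence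
`(u * h) ^ orderOf h = u ^ s` with `s = 1 + r + ⋯ + r ^ (orderOf h - 1)`. Thus
`orderOf (u * h) ≤ orderOf u * orderOf h`, and the inequality is strict as soon as `h` moves `u`,
because then `u ^ s` has smaller order than `u`. When `u` and `h` commute, their coprime orders
multiply.
-/

open Finset

section PowerMapConjugation

variable {G : Type*} [Group G] {u h : G} {r : ℤ}

theorem conj_pow_eq_zpow_pow (hc : h * u * h⁻¹ = u ^ r) (j : ℕ) :
    h ^ j * u * (h ^ j)⁻¹ = u ^ r ^ j := by
  induction j with
  | zero => simp
  | succ j ih =>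
    calc h ^ (j + 1) * u * (h ^ (j + 1))⁻¹ = h * (h ^ j * u * (h ^ j)⁻¹) * h⁻¹ := by
          rw [pow_succ']; group
      _ = u ^ r ^ (j + 1) := by rw [ih, ← conj_zpow, hc, ← zpow_mul, pow_succ']

theorem mul_pow_eq_zpow_geom_sum_mul (hc : h * u * h⁻¹ = u ^ r) (j : ℕ) :
    (u * h) ^ j = u ^ (∑ i ∈ range j, r ^ i) * h ^ j := by
  induction j with
  | zero => simp
  | succ j ih =>
    have hcomm : h ^ j * u = u ^ r ^ j * h ^ j := by
      rw [← conj_pow_eq_zpow_pow hc j]; group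
    calc (u * h) ^ (j + 1) = u ^ (∑ i ∈ range j, r ^ i) * (h ^ j * u) * h := by
          rw [pow_succ, ih]; group
      _ = u ^ (∑ i ∈ range (j + 1), r ^ i) * h ^ (j + 1) := by
          rw [hcomm, sum_range_succ, zpow_add]; group

theorem orderOf_mul_dvd_orderOf_mul_orderOf_zpow (hc : h * u * h⁻¹ = u ^ r) :
    orderOf (u * h) ∣ orderOf h * orderOf (u ^ ∑ i ∈ range (orderOf h), r ^ i) := by
  apply orderOf_dvd_of_pow_eq_one
  rw [pow_mul, mul_pow_eq_zpow_geom_sum_mul hc, pow_orderOf_eq_one, mul_one,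
    pow_orderOf_eq_one]

theorem orderOf_mul_dvd_mul_orderOf_of_conj_eq_zpow (hc : h * u * h⁻¹ = u ^ r) :
    orderOf (u * h) ∣ orderOf u * orderOf h :=
  (orderOf_mul_dvd_orderOf_mul_orderOf_zpow hc).trans <| by
    rw [mul_comm]
    exact mul_dvd_mul_right (orderOf_dvd_of_mem_zpowers (Subgroup.zpow_mem_zpowers u _)) _

/- If `u ^ s` had the order of `u`, then `(u ^ s) ^ (r - 1) = u ^ (r ^ m - 1) = 1` would give
`u ^ (r - 1) = 1`. -/
theorem orderOf_zpow_geom_sum_lt (hu : IsOfFinOrder u) {m : ℕ} (hm : u ^ r ^ m = u)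
    (hr : u ^ r ≠ u) : orderOf (u ^ ∑ i ∈ range m, r ^ i) < orderOf u := by
  refine lt_of_le_of_ne (Nat.le_of_dvd hu.orderOf_pos
    (orderOf_dvd_of_mem_zpowers (Subgroup.zpow_mem_zpowers u _))) fun heq => hr ?_
  have hkill : (u ^ ∑ i ∈ range m, r ^ i) ^ (r - 1) = 1 := by
    rw [← zpow_mul, geom_sum_mul, zpow_sub, hm, zpow_one, mul_inv_cancel]
  rwa [← orderOf_dvd_iff_zpow_eq_one, heq, orderOf_dvd_iff_zpow_eq_one, zpow_sub, zpow_one,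
    mul_inv_eq_one] at hkill

theorem orderOf_mul_lt_mul_orderOf_of_conj_eq_zpow (hu : IsOfFinOrder u) (hh : IsOfFinOrder h)
    (hc : h * u * h⁻¹ = u ^ r) (hr : u ^ r ≠ u) : orderOf (u * h) < orderOf u * orderOf h := by
  have hm : u ^ r ^ orderOf h = u := by
    rw [← conj_pow_eq_zpow_pow hc, pow_orderOf_eq_one]; group
  calc orderOf (u * h)
      ≤ orderOf h * orderOf (u ^ ∑ i ∈ range (orderOf h), r ^ i) :=
        Nat.le_of_dvd (Nat.mul_pos hh.orderOf_pos (hu.zpow.orderOf_pos))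
          (orderOf_mul_dvd_orderOf_mul_orderOf_zpow hc)
    _ < orderOf h * orderOf u :=
        Nat.mul_lt_mul_of_pos_left (orderOf_zpow_geom_sum_lt hu hm hr) hh.orderOf_pos
    _ = orderOf u * orderOf h := mul_comm _ _

theorem orderOf_mul_eq_mul_orderOf_iff_commute (hu : IsOfFinOrder u) (hh : IsOfFinOrder h)
    (hc : h * u * h⁻¹ = u ^ r) (hcop : (orderOf u).Coprime (orderOf h)) :
    orderOf (u * h) = orderOf u * orderOf h ↔ Commute u h := by
  refine ⟨fun heq => ?_, fun hcomm => hcomm.orderOf_mul_eq_mul_orderOf_of_coprime hcop⟩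
  by_contra hne
  have hr : u ^ r ≠ u := by
    rw [← hc]
    exact fun hfix => hne (mul_inv_eq_iff_eq_mul.mp hfix).symm
  exact (orderOf_mul_lt_mul_orderOf_of_conj_eq_zpow hu hh hc hr).ne heq

end PowerMapConjugation

theorem Subgroup.exists_conj_eq_zpow_of_isCyclic {G : Type*} [Group G] (N : Subgroup G)
    [N.Normal] [IsCyclic N] (g : G) : ∃ r : ℤ, ∀ u ∈ N, g * u * g⁻¹ = u ^ r := by
  obtain ⟨r, hr⟩ := MonoidHom.map_cyclic (MulAut.conjNormal (H := N) g).toMonoidHom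
  exact ⟨r, fun u hu => by simpa using congrArg Subtype.val (hr ⟨u, hu⟩)⟩

theorem Subgroup.IsComplement'.le_center_iff {G : Type*} [Group G] {N K : Subgroup G}
    (hNK : N.IsComplement' K) [IsMulCommutative N] :
    N ≤ center G ↔ ∀ (u : N) (h : K), Commute (u : G) h := by
  refine ⟨fun hN u h => (mem_center_iff.mp (hN u.2) h).symm, fun hcomm x hx => ?_⟩
  refine mem_center_iff.mpr fun g => ?_
  obtain ⟨⟨a, b⟩, rfl⟩ := hNK.2 g
  exact (Commute.mul_left (setLike_mul_comm a.2 hx) (hcomm ⟨x, hx⟩ b).symm).eq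

theorem Finset.sum_pow_eq_sum_pow_iff_of_le {ι : Type*} {s : Finset ι} {f g : ι → ℕ} {k : ℕ}
    (hk : k ≠ 0) (hfg : ∀ i ∈ s, f i ≤ g i) :
    ∑ i ∈ s, f i ^ k = ∑ i ∈ s, g i ^ k ↔ ∀ i ∈ s, f i = g i := by
  rw [sum_eq_sum_iff_of_le fun i hi => Nat.pow_le_pow_left (hfg i hi) k]
  exact forall₂_congr fun i _ => Nat.pow_left_injective hk |>.eq_iff

/-- If P is a cyclic normal Sylow p-subgroup of G, then ψ_k(G) ≤ ψ_k(P)·ψ_k(G/P),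
with equality iff P ⊆ Z(G). -/
theorem psiK_le_psiK_sylow_quot {G : Type*} [Group G] [Fintype G] (p : ℕ) [Fact p.Prime]
    (P : Sylow p G) [(P : Subgroup G).Normal] (hcyc : IsCyclic (P : Subgroup G))
    [Fintype (P : Subgroup G)] [Fintype (G ⧸ (P : Subgroup G))] (k : ℕ) (hk : 0 < k) :
    (∑ g : G, orderOf g ^ k) ≤
      (∑ u : (P : Subgroup G), orderOf u ^ k) *
        (∑ q : G ⧸ (P : Subgroup G), orderOf q ^ k) ∧
    ((∑ g : G, orderOf g ^ k) =
      (∑ u : (P : Subgroup G), orderOf u ^ k) *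
        (∑ q : G ⧸ (P : Subgroup G), orderOf q ^ k) ↔
      (P : Subgroup G) ≤ Subgroup.center G) := by
  classical
  have := hcyc
  obtain ⟨K, hK⟩ := Subgroup.exists_right_complement'_of_coprime P.card_coprime_index
  have hψG : ∑ g : G, orderOf g ^ k = ∑ x : ↥(P : Subgroup G) × K, orderOf (x.1 * x.2 : G) ^ k :=
    (hK.sum_comp fun g => orderOf g ^ k).symm
  have hψPQ : (∑ u : (P : Subgroup G), orderOf u ^ k) * ∑ q : G ⧸ (P : Subgroup G), orderOf q ^ k
      = ∑ x : ↥(P : Subgroup G) × K, (orderOf (x.1 : G) * orderOf (x.2 : G)) ^ k := by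
    rw [← hK.symm.QuotientMulEquiv.symm.bijective.sum_comp]
    simp only [MulEquiv.orderOf_eq, Subgroup.orderOf_coe, Fintype.sum_mul_sum,
      Fintype.sum_prod_type, mul_pow]
  have hcop (x : ↥(P : Subgroup G) × K) : (orderOf (x.1 : G)).Coprime (orderOf (x.2 : G)) := by
    refine Nat.Coprime.of_dvd ?_ ?_ P.card_coprime_index
    · exact Subgroup.orderOf_coe x.1 ▸ orderOf_dvd_natCard x.1
    · exact hK.symm.index_eq_card ▸ Subgroup.orderOf_coe x.2 ▸ orderOf_dvd_natCard x.2
  have hconj (x : ↥(P : Subgroup G) × K) :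
      ∃ r : ℤ, (x.2 : G) * x.1 * (x.2 : G)⁻¹ = (x.1 : G) ^ r :=
    (Subgroup.exists_conj_eq_zpow_of_isCyclic _ (x.2 : G)).imp fun _ hr => hr _ x.1.2
  have hle (x : ↥(P : Subgroup G) × K) :
      orderOf (x.1 * x.2 : G) ≤ orderOf (x.1 : G) * orderOf (x.2 : G) :=
    let ⟨_, hr⟩ := hconj x
    Nat.le_of_dvd (Nat.mul_pos (orderOf_pos _) (orderOf_pos _))
      (orderOf_mul_dvd_mul_orderOf_of_conj_eq_zpow hr)
  rw [hψG, hψPQ, sum_pow_eq_sum_pow_iff_of_le hk.ne' fun x _ => hle x, hK.le_center_iff]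
  refine ⟨sum_le_sum fun x _ => Nat.pow_le_pow_left (hle x) k, ?_⟩
  simp only [mem_univ, true_implies, Prod.forall]
  refine forall₂_congr fun u h => ?_
  obtain ⟨r, hr⟩ := hconj (u, h)
  exact orderOf_mul_eq_mul_orderOf_iff_commute (isOfFinOrder_of_finite _)
    (isOfFinOrder_of_finite _) hr (hcop (u, h))
end

section
/- Let G be a nilpotent group of order n and k a fixed positive integer. Then ψ_k(G) is minimal among all nilpotent groups of order n if and only if every Sylow subgroup of G has prime exponent. -/
/-!
A finite nilpotent group is the direct product of its Sylow subgroups, which have pairwise coprime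
orders, so element orders multiply across the factors and `ψ_k` is the product of the `ψ_k` of the
Sylow subgroups. In a group `P` of order `p ^ a` every nontrivial element has order at least `p`,
whence `ψ_k(P) ≥ 1 + (p ^ a - 1) p ^ k`, with equality (for `k > 0`) exactly when every nontrivial
element has order `p`. The product of these lower bounds is attained by a product of elementary
abelian groups, so it is the minimum, and `G` attains it iff each of its Sylow subgroups does.
-/

open Finset Function

/-- The paper's `ψ_k(G)`; as a `finsum` it needs no `Fintype` instance (it is `0` for infinite
`G`). -/
noncomputable def psi (k : ℕ) (G : Type*) [Monoid G] : ℕ :=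
  ∑ᶠ g : G, orderOf g ^ k

section Psi

variable {k : ℕ} {G H : Type*} [Monoid G] [Monoid H]

theorem psi_eq_sum [Fintype G] : psi k G = ∑ g : G, orderOf g ^ k :=
  finsum_eq_sum_of_fintype _

theorem psi_congr (e : G ≃* H) : psi k G = psi k H := by
  simp only [psi, ← e.orderOf_eq]
  exact finsum_comp_equiv e.toEquiv (f := fun h => orderOf h ^ k)

theorem psi_eq_one_add_sum_erase [Fintype G] [DecidableEq G] :
    psi k G = 1 + ∑ g ∈ univ.erase (1 : G), orderOf g ^ k := by
  rw [psi_eq_sum, ← add_sum_erase _ _ (mem_univ 1), orderOf_one, one_pow]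

theorem card_erase_one [Fintype G] [DecidableEq G] :
    #(univ.erase (1 : G)) = Nat.card G - 1 := by
  rw [card_erase_of_mem (mem_univ 1), card_univ, Nat.card_eq_fintype_card]

variable [Finite G] {m : ℕ}

theorem psi_eq_one_add_mul_of_orderOf_eq (hm : ∀ g : G, g ≠ 1 → orderOf g = m) :
    psi k G = 1 + (Nat.card G - 1) * m ^ k := by
  classical
  have := Fintype.ofFinite G
  rw [psi_eq_one_add_sum_erase, ← card_erase_one, ← smul_eq_mul, ← sum_const]
  exact congrArg _ (sum_congr rfl fun g hg => by rw [hm g (ne_of_mem_erase hg)])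

theorem one_add_mul_le_psi_of_le_orderOf (hm : ∀ g : G, g ≠ 1 → m ≤ orderOf g) :
    1 + (Nat.card G - 1) * m ^ k ≤ psi k G := by
  classical
  have := Fintype.ofFinite G
  rw [psi_eq_one_add_sum_erase, ← card_erase_one, ← smul_eq_mul, ← sum_const]
  gcongr with g hg
  exact hm g (ne_of_mem_erase hg)

theorem psi_eq_one_add_mul_iff_of_le_orderOf (hk : k ≠ 0) (hm : ∀ g : G, g ≠ 1 → m ≤ orderOf g) :
    psi k G = 1 + (Nat.card G - 1) * m ^ k ↔ ∀ g : G, g ≠ 1 → orderOf g = m := by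
  classical
  have := Fintype.ofFinite G
  rw [psi_eq_one_add_sum_erase, ← card_erase_one, ← smul_eq_mul, ← sum_const, add_right_inj,
    eq_comm, sum_eq_sum_iff_of_le fun g hg => Nat.pow_le_pow_left (hm g (ne_of_mem_erase hg)) k]
  simp only [mem_erase, mem_univ, and_true, (Nat.pow_left_injective hk).eq_iff, eq_comm]

end Psi

section Pi

variable {ι : Type*} [Fintype ι] {M : ι → Type*} [∀ i, Group (M i)]

theorem orderOf_pi_of_coprime (hM : Pairwise (Nat.Coprime on fun i => Nat.card (M i)))
    (x : ∀ i, M i) : orderOf x = ∏ i, orderOf (x i) := by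
  rw [Pi.orderOf, lcm_eq_prod]
  intro i _ j _ hij
  exact ((hM hij).coprime_dvd_left (orderOf_dvd_natCard _)).coprime_dvd_right
    (orderOf_dvd_natCard _)

theorem psi_pi_of_coprime [∀ i, Finite (M i)] {k : ℕ}
    (hM : Pairwise (Nat.Coprime on fun i => Nat.card (M i))) :
    psi k (∀ i, M i) = ∏ i, psi k (M i) := by
  classical
  have := fun i => Fintype.ofFinite (M i)
  simp only [psi_eq_sum, prod_univ_sum, Fintype.piFinset_univ, orderOf_pi_of_coprime hM,
    prod_pow]

end Pi

instance fact_prime_of_mem_primeFactors (n : ℕ) (p : n.primeFactors) : Fact (p : ℕ).Prime :=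
  ⟨Nat.prime_of_mem_primeFactors p.2⟩

theorem pairwise_coprime_pow_primeFactors (n : ℕ) (f : n.primeFactors → ℕ) :
    Pairwise (Nat.Coprime on fun p : n.primeFactors => (p : ℕ) ^ f p) := fun _ _ hpq =>
  Nat.coprime_pow_primes _ _ Fact.out Fact.out (Subtype.coe_ne_coe.mpr hpq)

section PGroup

variable {p k : ℕ} [Fact p.Prime] {Q : Type*} [Group Q] [Finite Q]

theorem IsPGroup.one_add_mul_le_psi (hQ : IsPGroup p Q) :
    1 + (Nat.card Q - 1) * p ^ k ≤ psi k Q :=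
  one_add_mul_le_psi_of_le_orderOf fun _ hg => Nat.le_of_dvd (orderOf_pos _) (hQ.dvd_orderOf hg)

theorem IsPGroup.psi_eq_one_add_mul_iff [Nontrivial Q] (hQ : IsPGroup p Q) (hk : k ≠ 0) :
    psi k Q = 1 + (Nat.card Q - 1) * p ^ k ↔ Monoid.exponent Q = p := by
  rw [Monoid.exponent_eq_prime_iff Fact.out]
  exact psi_eq_one_add_mul_iff_of_le_orderOf hk fun _ hg =>
    Nat.le_of_dvd (orderOf_pos _) (hQ.dvd_orderOf hg)

end PGroup

namespace Sylow

variable {p k : ℕ} [Fact p.Prime] {G : Type*} [Group G] [Finite G]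

theorem one_add_mul_le_psi (P : Sylow p G) :
    1 + (p ^ (Nat.card G).factorization p - 1) * p ^ k ≤ psi k P := by
  rw [← P.card_eq_multiplicity]
  exact P.isPGroup'.one_add_mul_le_psi

theorem psi_eq_one_add_mul_iff (P : Sylow p G) (hp : p ∣ Nat.card G) (hk : k ≠ 0) :
    psi k P = 1 + (p ^ (Nat.card G).factorization p - 1) * p ^ k ↔
      Monoid.exponent P = p := by
  have : Nontrivial P := P.isPGroup'.nontrivial_iff_card.mpr
    ⟨_, (Fact.out : p.Prime).factorization_pos_of_dvd Nat.card_pos.ne' hp, P.card_eq_multiplicity⟩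
  rw [← P.card_eq_multiplicity]
  exact P.isPGroup'.psi_eq_one_add_mul_iff hk

theorem exponent_eq (P Q : Sylow p G) : Monoid.exponent P = Monoid.exponent Q :=
  Monoid.exponent_eq_of_mulEquiv (P.equiv Q)

end Sylow

theorem Finset.prod_eq_prod_iff_of_le_of_pos {ι R : Type*} [CommSemiring R] [PartialOrder R]
    [IsStrictOrderedRing R] {s : Finset ι} {f g : ι → R} (hf : ∀ i ∈ s, 0 < f i)
    (hfg : ∀ i ∈ s, f i ≤ g i) : ∏ i ∈ s, f i = ∏ i ∈ s, g i ↔ ∀ i ∈ s, f i = g i := by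
  refine ⟨fun h => ?_, prod_congr rfl⟩
  by_contra! ⟨i, hi, hne⟩
  exact (prod_lt_prod hf hfg ⟨i, hi, (hfg i hi).lt_of_ne hne⟩).ne h

def psiMin (n k : ℕ) : ℕ :=
  ∏ p ∈ n.primeFactors, (1 + (p ^ n.factorization p - 1) * p ^ k)

namespace Group.IsNilpotent

variable {k : ℕ} {G : Type*} [Group G] [Finite G]

theorem psi_eq_prod_psi_sylow (hG : IsNilpotent G) :
    psi k G = ∏ p : (Nat.card G).primeFactors, psi k (default : Sylow p G) := by
  have hn := ((isNilpotent_of_finite_tfae (G := G)).out 0 3).mp hG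
  rw [psi_congr ((Sylow.directProductOfNormal fun P => hn _ ‹_› P).symm.trans
    (MulEquiv.piCongrRight fun p : (Nat.card G).primeFactors =>
      letI := Sylow.unique_of_normal _ (hn _ inferInstance (default : Sylow p G))
      MulEquiv.piUnique fun P : Sylow p G => P)),
    psi_pi_of_coprime]
  simpa only [Sylow.card_eq_multiplicity] using pairwise_coprime_pow_primeFactors _ _

theorem psiMin_le_psi (hG : IsNilpotent G) : psiMin (Nat.card G) k ≤ psi k G := by
  rw [hG.psi_eq_prod_psi_sylow, psiMin, ← prod_coe_sort (Nat.card G).primeFactors]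
  exact prod_le_prod' fun p _ => Sylow.one_add_mul_le_psi _

theorem psi_eq_psiMin_iff (hG : IsNilpotent G) (hk : k ≠ 0) :
    psi k G = psiMin (Nat.card G) k ↔
      ∀ p : ℕ, p.Prime → p ∣ Nat.card G → ∀ Q : Sylow p G, Monoid.exponent Q = p := by
  rw [hG.psi_eq_prod_psi_sylow, psiMin, ← prod_coe_sort (Nat.card G).primeFactors, eq_comm,
    prod_eq_prod_iff_of_le_of_pos (fun _ _ => by positivity)
      fun p _ => Sylow.one_add_mul_le_psi _]
  constructor
  · intro h p hp hpn Q
    have : Fact p.Prime := ⟨hp⟩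
    rw [Q.exponent_eq default, ← Sylow.psi_eq_one_add_mul_iff _ hpn hk]
    exact (h ⟨p, Nat.mem_primeFactors.mpr ⟨hp, hpn, Nat.card_pos.ne'⟩⟩ (mem_univ _)).symm
  · intro h p _
    rw [eq_comm, Sylow.psi_eq_one_add_mul_iff _ (Nat.dvd_of_mem_primeFactors p.2) hk]
    exact h p Fact.out (Nat.dvd_of_mem_primeFactors p.2) _

end Group.IsNilpotent

theorem exists_isNilpotent_psi_eq_psiMin (k : ℕ) {n : ℕ} (hn : n ≠ 0) :
    ∃ (H : Type u) (_ : Group H) (_ : Finite H),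
      Group.IsNilpotent H ∧ Nat.card H = n ∧ psi k H = psiMin n k := by
  let E (p : n.primeFactors) := Fin (n.factorization p) → Multiplicative (ZMod p)
  have hE (p : n.primeFactors) : Nat.card (E p) = p ^ n.factorization p := by
    simp [E]
  have hEorder (p : n.primeFactors) (x : E p) (hx : x ≠ 1) : orderOf x = p := by
    have hdvd : orderOf x ∣ p := by
      rw [Pi.orderOf]
      exact Finset.lcm_dvd fun i _ => (orderOf_dvd_natCard (x i)).trans (by simp)
    exact ((Nat.dvd_prime Fact.out).mp hdvd).resolve_left (orderOf_eq_one_iff.not.mpr hx)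
  refine ⟨ULift (∀ p, E p), inferInstance, inferInstance, inferInstance, ?_, ?_⟩
  · rw [Nat.card_ulift, Nat.card_pi, Finset.prod_congr rfl fun p _ => hE p,
      prod_coe_sort n.primeFactors fun p => p ^ n.factorization p]
    exact Nat.prod_factorization_pow_eq_self hn
  · have hcop : Pairwise (Nat.Coprime on fun p => Nat.card (E p)) := by
      simpa only [hE] using pairwise_coprime_pow_primeFactors n _
    rw [psi_congr MulEquiv.ulift, psi_pi_of_coprime hcop, psiMin,
      ← prod_coe_sort n.primeFactors]
    refine prod_congr rfl fun p _ => ?_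
    rw [← hE p]
    exact psi_eq_one_add_mul_of_orderOf_eq (hEorder p)

/-- A nilpotent group G of order n minimizes ψ_k among nilpotent groups of order n iff
every Sylow subgroup of G (for primes dividing n) has prime exponent. -/
theorem psiK_nilpotent_min_iff {G : Type u} [Group G] [Fintype G] (k n : ℕ) (hk : 0 < k)
    (hn : Fintype.card G = n) (hnil : Group.IsNilpotent G) :
    ((∀ (H : Type u) [Group H] [Fintype H], Group.IsNilpotent H → Fintype.card H = n →
        (∑ g : G, orderOf g ^ k) ≤ ∑ h : H, orderOf h ^ k) ↔
      (∀ p : ℕ, p.Prime → p ∣ n → ∀ Q : Sylow p G,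
        Monoid.exponent (Q : Subgroup G) = p)) := by
  simp only [← psi_eq_sum, ← Nat.card_eq_fintype_card] at hn ⊢
  subst hn
  rw [← hnil.psi_eq_psiMin_iff hk.ne']
  constructor
  · intro hmin
    obtain ⟨H, _, _, hHnil, hHcard, hHpsi⟩ := exists_isNilpotent_psi_eq_psiMin.{u} k
      (Nat.card_pos (α := G)).ne'
    have := Fintype.ofFinite H
    exact le_antisymm (hHpsi ▸ hmin H hHnil hHcard) hnil.psiMin_le_psi
  · intro hG H _ _ hHnil hHcard
    exact hG ▸ hHcard ▸ hHnil.psiMin_le_psi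
end

section
/- For a prime p, positive integers r_1 ≤ r_2 ≤ ⋯ ≤ r_t, and positive integer k: ψ_k(Z_{p^{r_1}} × ⋯ × Z_{p^{r_t}}) = ψ_k((Z_{p^{r_1}})^t) + p^{r_1}·(ψ_k(Z_{p^{r_2}} × ⋯ × Z_{p^{r_t}}) − ψ_k((Z_{p^{r_1}})^{t−1})). -/
/-!
Split off the first factor `C = ℤ/p^{r₁}`. For both products `C × G'` in the recurrence,
`ψ_k(C × G') - p^{r₁} ψ_k(G') = ∑_{x ∈ G'} f(o(x))`
with `f(m) = ∑_{c ∈ C} lcm(o(c), m)^k - p^{r₁} m^k`.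
Since `f` vanishes on multiples of `p^{r₁}`, in a `p`-group only the elements of order dividing
`p^{r₁}` contribute. In `G' = ∏_{i ≥ 2} ℤ/p^{r_i}` and in `G' = (ℤ/p^{r₁})^{t-1}` the equation
`x^d = 1` has `d^{t-1}` solutions for every `d ∣ p^{r₁}` (because `r₁ ≤ r_i`), and these counts
determine, by Möbius inversion over the divisors, how many elements have each order `d ∣ p^{r₁}`.
-/

open Finset

def Fin.consMulEquiv {n : ℕ} (M : Fin (n + 1) → Type*) [∀ i, Monoid (M i)] :
    (M 0 × ∀ i : Fin n, M i.succ) ≃* ∀ i, M i where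
  toEquiv := Fin.consEquiv M
  map_mul' x y := by
    funext i
    cases i using Fin.cases <;> simp [Fin.consEquiv]

theorem orderOf_fin_cons {n : ℕ} {M : Fin (n + 1) → Type*} [∀ i, Monoid (M i)]
    (a : M 0) (x : ∀ i : Fin n, M i.succ) :
    orderOf (Fin.cons a x : ∀ i, M i) = (orderOf a).lcm (orderOf x) := by
  rw [← Prod.orderOf_mk, ← MulEquiv.orderOf_eq (Fin.consMulEquiv M)]
  rfl

theorem sum_orderOf_pi_fin_succ {n : ℕ} {M : Fin (n + 1) → Type*} [∀ i, Monoid (M i)]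
    [∀ i, Fintype (M i)] {R : Type*} [AddCommMonoid R] (F : ℕ → R) :
    ∑ g : ∀ i, M i, F (orderOf g) =
      ∑ x : ∀ i : Fin n, M i.succ, ∑ a : M 0, F ((orderOf a).lcm (orderOf x)) := by
  rw [← (Fin.consEquiv M).sum_comp, Fintype.sum_prod_type, sum_comm]
  exact sum_congr rfl fun x _ => sum_congr rfl fun a _ => congrArg F (orderOf_fin_cons a x)

theorem sum_lcm_orderOf_of_card_dvd {G : Type*} [Group G] [Fintype G] {R : Type*}
    [AddCommMonoid R] (F : ℕ → R) {m : ℕ} (hm : Fintype.card G ∣ m) :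
    ∑ a : G, F ((orderOf a).lcm m) = Fintype.card G • F m := by
  simp [Nat.lcm_eq_right (orderOf_dvd_card.trans hm)]

theorem IsCyclic.card_pow_eq_one_of_dvd {G : Type*} [Group G] [IsCyclic G] [Fintype G]
    [DecidableEq G] {d : ℕ} (hd : d ∣ Fintype.card G) (hd0 : d ≠ 0) :
    #{a : G | a ^ d = 1} = d := by
  rw [← sum_card_orderOf_eq_card_pow_eq_one hd0,
    sum_congr rfl fun e he => IsCyclic.card_orderOf_eq_totient ((Nat.mem_divisors.1 he).1.trans hd)]
  exact Nat.sum_totient d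

theorem card_pi_pow_eq_one_of_isCyclic {ι : Type*} [Fintype ι] [DecidableEq ι] {M : ι → Type*}
    [∀ i, Group (M i)] [∀ i, IsCyclic (M i)] [∀ i, Fintype (M i)] [∀ i, DecidableEq (M i)]
    {d : ℕ} (hd : ∀ i, d ∣ Fintype.card (M i)) (hd0 : d ≠ 0) :
    #{x : ∀ i, M i | x ^ d = 1} = d ^ Fintype.card ι := by
  have e : {x : ∀ i, M i // x ^ d = 1} ≃ ∀ i, {a : M i // a ^ d = 1} :=
    (Equiv.subtypeEquivRight fun x => by simp [funext_iff]).trans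
      (Equiv.subtypePiEquivPi (p := fun i (a : M i) => a ^ d = 1))
  rw [← Fintype.card_subtype, Fintype.card_congr e, Fintype.card_pi]
  simp [Fintype.card_subtype, IsCyclic.card_pow_eq_one_of_dvd (hd _) hd0]

theorem IsPGroup.orderOf_dvd_or_dvd {p : ℕ} [Fact p.Prime] {G : Type*} [Group G]
    (hG : IsPGroup p G) (a : ℕ) (x : G) : orderOf x ∣ p ^ a ∨ p ^ a ∣ orderOf x := by
  obtain ⟨j, hj⟩ := hG.exists_orderOf_eq_pow x
  rw [hj]
  exact (le_total j a).imp (pow_dvd_pow p) (pow_dvd_pow p)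

theorem sum_orderOf_eq_sum_divisors {G : Type*} [Group G] [Fintype G] {R : Type*}
    [AddCommMonoid R] {n : ℕ} (hn : n ≠ 0)
    (F : ℕ → R) (hF : ∀ m, n ∣ m → F m = 0) (hG : ∀ x : G, orderOf x ∣ n ∨ n ∣ orderOf x) :
    ∑ x : G, F (orderOf x) = ∑ d ∈ n.divisors, #{x : G | orderOf x = d} • F d := by
  rw [← sum_filter_of_ne (p := fun x => orderOf x ∈ n.divisors) fun x _ hx => ?_,
    ← sum_fiberwise_of_maps_to (g := orderOf) (t := n.divisors) fun x hx => (mem_filter.1 hx).2]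
  · refine sum_congr rfl fun d hd => ?_
    have hfiber : filter (fun x => orderOf x = d) {x : G | orderOf x ∈ n.divisors} =
        ({x : G | orderOf x = d} : Finset G) := by
      ext x
      simp only [mem_filter, mem_univ, true_and, and_iff_right_iff_imp]
      rintro rfl
      exact hd
    rw [hfiber, sum_congr rfl fun x hx => congrArg F (mem_filter.1 hx).2, sum_const]
  · exact Nat.mem_divisors.2 ⟨(hG x).resolve_right fun h => hx (hF _ h), hn⟩

section OrderStatistics

variable {G H : Type*} [Group G] [Group H] [Fintype G] [Fintype H] [DecidableEq G] [DecidableEq H]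

theorem card_orderOf_eq_of_card_pow_eq_one {n : ℕ} (hn : n ≠ 0)
    (h : ∀ d, d ∣ n → #{x : G | x ^ d = 1} = #{y : H | y ^ d = 1}) {d : ℕ} (hd : d ∣ n) :
    #{x : G | orderOf x = d} = #{y : H | orderOf y = d} := by
  induction d using Nat.strong_induction_on with | _ d ih
  have hd0 : d ≠ 0 := ne_zero_of_dvd_ne_zero hn hd
  have hsum := sum_card_orderOf_eq_card_pow_eq_one (G := G) hd0
  rw [h d hd, ← sum_card_orderOf_eq_card_pow_eq_one hd0, ← Nat.cons_self_properDivisors hd0,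
    sum_cons, sum_cons] at hsum
  have hproper : ∑ e ∈ d.properDivisors, #{x : G | orderOf x = e} =
      ∑ e ∈ d.properDivisors, #{y : H | orderOf y = e} :=
    sum_congr rfl fun e he =>
      ih e (Nat.mem_properDivisors.1 he).2 ((Nat.mem_properDivisors.1 he).1.trans hd)
  omega

theorem sum_orderOf_eq_of_card_pow_eq_one {R : Type*} [AddCommMonoid R] {n : ℕ} (hn : n ≠ 0)
    (F : ℕ → R) (hF : ∀ m, n ∣ m → F m = 0) (hG : ∀ x : G, orderOf x ∣ n ∨ n ∣ orderOf x)
    (hH : ∀ y : H, orderOf y ∣ n ∨ n ∣ orderOf y)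
    (h : ∀ d, d ∣ n → #{x : G | x ^ d = 1} = #{y : H | y ^ d = 1}) :
    ∑ x : G, F (orderOf x) = ∑ y : H, F (orderOf y) := by
  rw [sum_orderOf_eq_sum_divisors hn F hF hG, sum_orderOf_eq_sum_divisors hn F hF hH]
  exact sum_congr rfl fun d hd =>
    by rw [card_orderOf_eq_of_card_pow_eq_one hn h (Nat.dvd_of_mem_divisors hd)]

end OrderStatistics

theorem isPGroup_pi_zmod {ι : Type*} [Fintype ι] {p : ℕ} [NeZero p] (s : ι → ℕ) :
    IsPGroup p (∀ i, Multiplicative (ZMod (p ^ s i))) :=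
  IsPGroup.of_card (n := ∑ i, s i) <| by
    simp [Nat.card_pi, prod_pow_eq_pow_sum]

theorem psiK_recurrence_general (p k t : ℕ) (hp : p.Prime) [NeZero p]
    (r : Fin (t + 1) → ℕ) (hmono : Monotone r) :
    ((∑ g : (Π i : Fin (t + 1), Multiplicative (ZMod (p ^ r i))), orderOf g ^ k : ℕ) : ℤ) =
      ((∑ g : Fin (t + 1) → Multiplicative (ZMod (p ^ r 0)), orderOf g ^ k : ℕ) : ℤ) +
      (p : ℤ) ^ (r 0) *
        (((∑ g : (Π i : Fin t, Multiplicative (ZMod (p ^ r i.succ))), orderOf g ^ k : ℕ) : ℤ) -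
         ((∑ g : Fin t → Multiplicative (ZMod (p ^ r 0)), orderOf g ^ k : ℕ) : ℤ)) := by
  classical
  have := Fact.mk hp
  have hcard (s : ℕ) : Fintype.card (Multiplicative (ZMod (p ^ s))) = p ^ s := by
    rw [Fintype.card_multiplicative, ZMod.card]
  let f : ℕ → ℤ := fun m =>
    ∑ a : Multiplicative (ZMod (p ^ r 0)), (((orderOf a).lcm m : ℕ) : ℤ) ^ k - (p : ℤ) ^ r 0 * m ^ k
  have hf (m : ℕ) (hm : p ^ r 0 ∣ m) : f m = 0 := by
    simp only [f, sum_lcm_orderOf_of_card_dvd (fun m : ℕ => (m : ℤ) ^ k) ((hcard _).symm ▸ hm),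
      hcard, nsmul_eq_mul]
    push_cast
    ring
  have hN : p ^ r 0 ≠ 0 := pow_ne_zero _ hp.ne_zero
  have key : ∑ x : (Π i : Fin t, Multiplicative (ZMod (p ^ r i.succ))), f (orderOf x) =
      ∑ y : Fin t → Multiplicative (ZMod (p ^ r 0)), f (orderOf y) :=
    sum_orderOf_eq_of_card_pow_eq_one hN f hf ((isPGroup_pi_zmod _).orderOf_dvd_or_dvd _)
      ((isPGroup_pi_zmod _).orderOf_dvd_or_dvd _) fun d hd => by
        have hd0 := ne_zero_of_dvd_ne_zero hN hd
        rw [card_pi_pow_eq_one_of_isCyclic (fun i => (hcard _).symm ▸ hd.trans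
            (pow_dvd_pow p (hmono (Fin.zero_le i.succ)))) hd0,
          card_pi_pow_eq_one_of_isCyclic (fun _ => (hcard _).symm ▸ hd) hd0]
  simp only [f, sum_sub_distrib, ← mul_sum] at key
  rw [sum_orderOf_pi_fin_succ (· ^ k), sum_orderOf_pi_fin_succ (M := fun _ => _) (· ^ k)]
  push_cast
  linarith

/-- Recurrence: ψ_k(Z_{p^{r_1}} × ⋯ × Z_{p^{r_t}}) = ψ_k((Z_{p^{r_1}})^t)
+ p^{r_1}·(ψ_k(Z_{p^{r_2}} × ⋯ × Z_{p^{r_t}}) − ψ_k((Z_{p^{r_1}})^{t−1})). -/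
theorem psiK_recurrence (p k t : ℕ) (hp : p.Prime) (hk : 0 < k) [NeZero p]
    (r : Fin (t + 1) → ℕ) (hmono : Monotone r) (hpos : ∀ i, 0 < r i) :
    ((∑ g : (Π i : Fin (t + 1), Multiplicative (ZMod (p ^ r i))), orderOf g ^ k : ℕ) : ℤ) =
      ((∑ g : Fin (t + 1) → Multiplicative (ZMod (p ^ r 0)), orderOf g ^ k : ℕ) : ℤ) +
      (p : ℤ) ^ (r 0) *
        (((∑ g : (Π i : Fin t, Multiplicative (ZMod (p ^ r i.succ))), orderOf g ^ k : ℕ) : ℤ) -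
         ((∑ g : Fin t → Multiplicative (ZMod (p ^ r 0)), orderOf g ^ k : ℕ) : ℤ)) :=
  psiK_recurrence_general p k t hp r hmono
end
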